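/- arXiv:1912.12176 — 2 statements merged into one kernel-verified Lean document; each statement's English description precedes it below -/
import Mathlib

section
/- Let n ≥ 1, let A = (a^{ij}) be a symmetric positive-definite n×n real matrix and b ∈ ℝⁿ. For y ∈ ℝⁿ set α(y) = √(yᵀAy), β(y) = bᵀy, Y(y) = Ay, and on the open region where 0 < α(y) < β(y) set F(y) = (1/2)·α(y)β(y)²/(β(y) − α(y)). Then on this region the Hessian of F is given by ∂²F/∂y_i∂y_j = [β³/(2α(β − α)²)]·a^{ij} + [α³/(β − α)³]·b^i b^j + [(β³ − 3αβ²)/(2α(β − α)³)]·(b^i Y^j + b^j Y^i) + [β³(3α − β)/(2α³(β − α)³)]·Y^i Y^j, with α, β, Y evaluated at y. -/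
/-!
Write the function as `Φ(α, β)` with `α = √(yᵀAy)`, `β = bᵀy` and `Φ(α, β) = αβ²/(2(β − α))`.
Since `∂ᵢα = Yᵢ/α` and `∂ᵢβ = bᵢ`, the chain rule gives `∂ᵢ(Φ(α, β)) = Φ₁ Yᵢ/α + Φ₂ bᵢ`;
differentiating once more, with `∂ⱼ(Yᵢ/α) = aᵢⱼ/α − YᵢYⱼ/α³`, the Hessian of any such function is
`(Φ₁/α) aᵢⱼ + Φ₂₂ bᵢbⱼ + (Φ₁₂/α) Yᵢbⱼ + (Φ₂₁/α) bᵢYⱼ + (Φ₁₁/α² − Φ₁/α³) YᵢYⱼ`.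
For the deformed infinite series metric the partial derivatives of the rational function `Φ`
turn these coefficients into the claimed ones.
-/

open Matrix

/-- Partial derivative of a function on `ℝⁿ` with respect to the `i`-th coordinate. -/
noncomputable def pder {n : ℕ} (i : Fin n) (F : (Fin n → ℝ) → ℝ) : (Fin n → ℝ) → ℝ :=
  fun y => deriv (fun t => F (Function.update y i t)) (y i)

open Filter Topology ContinuousLinearMap

theorem HasFDerivAt.div {𝕜 E : Type*} [NontriviallyNormedField 𝕜] [NormedAddCommGroup E]
    [NormedSpace 𝕜 E] {c d : E → 𝕜} {c' d' : E →L[𝕜] 𝕜} {x : E}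
    (hc : HasFDerivAt c c' x) (hd : HasFDerivAt d d' x) (hx : d x ≠ 0) :
    HasFDerivAt (fun y => c y / d y) ((d x ^ 2)⁻¹ • (d x • c' - c x • d')) x := by
  simp_rw [div_eq_mul_inv]
  refine (hc.mul ((hasDerivAt_inv hx).hasFDerivAt.comp x hd)).congr_fderiv ?_
  refine ContinuousLinearMap.ext fun v => ?_
  simp only [_root_.add_apply, _root_.sub_apply, _root_.smul_apply, toSpanSingleton_apply,
    ContinuousLinearMap.comp_apply, Function.comp_apply, smul_eq_mul]
  field_simp
  ring

section Pder

variable {n : ℕ}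

theorem HasFDerivAt.pder_eq {F : (Fin n → ℝ) → ℝ} {F' : (Fin n → ℝ) →L[ℝ] ℝ} {y : Fin n → ℝ}
    (hF : HasFDerivAt F F' y) (i : Fin n) : pder i F y = F' (Pi.single i 1) := by
  rw [← Function.update_eq_self i y] at hF
  exact (hF.comp_hasDerivAt (y i) (hasDerivAt_update y i (y i))).deriv

theorem Filter.EventuallyEq.pder_eq {F G : (Fin n → ℝ) → ℝ} {y : Fin n → ℝ}
    (h : F =ᶠ[𝓝 y] G) (i : Fin n) : pder i F y = pder i G y := by
  have hupdate := (hasDerivAt_update y i (y i)).continuousAt.tendsto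
  rw [Function.update_eq_self] at hupdate
  exact (h.comp_tendsto hupdate).deriv_eq

end Pder

section AlphaBeta

variable {n : ℕ}

noncomputable def dotProductCLM (w : Fin n → ℝ) : (Fin n → ℝ) →L[ℝ] ℝ :=
  LinearMap.toContinuousLinearMap (dotProductEquiv ℝ (Fin n) w)

theorem dotProductCLM_apply (w v : Fin n → ℝ) : dotProductCLM w v = w ⬝ᵥ v := rfl

theorem hasFDerivAt_dotProduct (w z : Fin n → ℝ) :
    HasFDerivAt (fun z => w ⬝ᵥ z) (dotProductCLM w) z :=
  (dotProductCLM w).hasFDerivAt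

theorem hasFDerivAt_dotProduct_mulVec_self {A : Matrix (Fin n) (Fin n) ℝ} (hA : A.IsSymm)
    (z : Fin n → ℝ) :
    HasFDerivAt (fun z => z ⬝ᵥ A *ᵥ z) ((2 : ℝ) • dotProductCLM (A *ᵥ z)) z := by
  have h := HasFDerivAt.fun_sum (u := Finset.univ) fun k _ =>
    (hasFDerivAt_apply k z).mul (hasFDerivAt_dotProduct (A k) z)
  refine h.congr_fderiv (ContinuousLinearMap.ext fun v => ?_)
  have hsymm : z ⬝ᵥ A *ᵥ v = A *ᵥ z ⬝ᵥ v := by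
    rw [dotProduct_mulVec, ← hA.eq, vecMul_transpose, hA.eq]
  simp only [_root_.sum_apply, _root_.add_apply, _root_.smul_apply, dotProductCLM_apply,
    proj_apply, smul_eq_mul, Finset.sum_add_distrib]
  change z ⬝ᵥ A *ᵥ v + A *ᵥ z ⬝ᵥ v = 2 * (A *ᵥ z ⬝ᵥ v)
  rw [hsymm]
  ring

noncomputable def alphaBeta (A : Matrix (Fin n) (Fin n) ℝ) (b z : Fin n → ℝ) : ℝ × ℝ :=
  (√(z ⬝ᵥ A *ᵥ z), b ⬝ᵥ z)

variable {A : Matrix (Fin n) (Fin n) ℝ} (b : Fin n → ℝ)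

theorem hasFDerivAt_alphaBeta (hA : A.IsSymm) {z : Fin n → ℝ} (hz : 0 < z ⬝ᵥ A *ᵥ z) :
    HasFDerivAt (alphaBeta A b)
      (((√(z ⬝ᵥ A *ᵥ z))⁻¹ • dotProductCLM (A *ᵥ z)).prod (dotProductCLM b)) z := by
  refine (HasFDerivAt.prodMk ((hasFDerivAt_dotProduct_mulVec_self hA z).sqrt hz.ne')
    (hasFDerivAt_dotProduct b z)).congr_fderiv ?_
  ext v <;> simp [field]

theorem pder_comp_alphaBeta (hA : A.IsSymm) {H : ℝ × ℝ → ℝ} {H₁ H₂ : ℝ} {z : Fin n → ℝ}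
    (hz : 0 < z ⬝ᵥ A *ᵥ z)
    (hH : HasFDerivAt H (H₁ • fst ℝ ℝ ℝ + H₂ • snd ℝ ℝ ℝ) (alphaBeta A b z)) (i : Fin n) :
    pder i (H ∘ alphaBeta A b) z = H₁ * (A *ᵥ z) i / √(z ⬝ᵥ A *ᵥ z) + H₂ * b i := by
  rw [(hH.comp z (hasFDerivAt_alphaBeta b hA hz)).pder_eq i]
  simp only [ContinuousLinearMap.comp_apply, _root_.add_apply, _root_.smul_apply, prod_apply,
    coe_fst', coe_snd', dotProductCLM_apply, dotProduct_single, smul_eq_mul]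
  ring

theorem pder_pder_comp_alphaBeta (hA : A.IsSymm) {H H₁ H₂ : ℝ × ℝ → ℝ} {H₁₁ H₁₂ H₂₁ H₂₂ : ℝ}
    {y : Fin n → ℝ} (hy : 0 < y ⬝ᵥ A *ᵥ y)
    (hH : ∀ᶠ p in 𝓝 (alphaBeta A b y), HasFDerivAt H (H₁ p • fst ℝ ℝ ℝ + H₂ p • snd ℝ ℝ ℝ) p)
    (hH₁ : HasFDerivAt H₁ (H₁₁ • fst ℝ ℝ ℝ + H₁₂ • snd ℝ ℝ ℝ) (alphaBeta A b y))
    (hH₂ : HasFDerivAt H₂ (H₂₁ • fst ℝ ℝ ℝ + H₂₂ • snd ℝ ℝ ℝ) (alphaBeta A b y))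
    (i j : Fin n) :
    let α := √(y ⬝ᵥ A *ᵥ y)
    let Y := A *ᵥ y
    pder j (pder i (H ∘ alphaBeta A b)) y =
      H₁ (alphaBeta A b y) / α * A i j + H₂₂ * b i * b j + H₁₂ / α * Y i * b j
        + H₂₁ / α * b i * Y j + (H₁₁ / α ^ 2 - H₁ (alphaBeta A b y) / α ^ 3) * Y i * Y j := by
  dsimp only
  have hαβ := hasFDerivAt_alphaBeta b hA hy
  have hq := (hasFDerivAt_dotProduct_mulVec_self hA y).continuousAt
  have hfirst : pder i (H ∘ alphaBeta A b) =ᶠ[𝓝 y]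
      fun z => H₁ (alphaBeta A b z) * (A *ᵥ z) i / (alphaBeta A b z).1
        + H₂ (alphaBeta A b z) * b i := by
    filter_upwards [hαβ.continuousAt.eventually hH, hq.eventually (lt_mem_nhds hy)] with z hHz hz
    exact pder_comp_alphaBeta b hA hz hHz i
  have hα : √(y ⬝ᵥ A *ᵥ y) ≠ 0 := (Real.sqrt_pos.2 hy).ne'
  have hsecond := (((hH₁.comp y hαβ).mul (hasFDerivAt_dotProduct (A i) y)).div hαβ.fst hα).add
    ((hH₂.comp y hαβ).mul_const (b i))
  rw [hfirst.pder_eq j]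
  refine (hsecond.pder_eq j).trans ?_
  simp only [_root_.add_apply, _root_.sub_apply, _root_.smul_apply, ContinuousLinearMap.comp_apply,
    prod_apply, coe_fst', coe_snd', dotProductCLM_apply, dotProduct_single, smul_eq_mul,
    Pi.mul_apply, Function.comp_apply, alphaBeta]
  rw [show A i ⬝ᵥ y = (A *ᵥ y) i from rfl]
  field_simp
  ring

end AlphaBeta

noncomputable def deformedInfiniteSeries (p : ℝ × ℝ) : ℝ := p.1 * p.2 ^ 2 / (p.2 - p.1)

section DeformedInfiniteSeries

variable {p : ℝ × ℝ}

theorem hasFDerivAt_snd_sub_fst :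
    HasFDerivAt (fun p : ℝ × ℝ => p.2 - p.1) (snd ℝ ℝ ℝ - fst ℝ ℝ ℝ) p :=
  hasFDerivAt_snd.sub hasFDerivAt_fst

theorem hasFDerivAt_half_deformedInfiniteSeries (hp : p.1 ≠ p.2) :
    HasFDerivAt (fun p => 1 / 2 * deformedInfiniteSeries p)
      ((p.2 ^ 3 / (2 * (p.2 - p.1) ^ 2)) • fst ℝ ℝ ℝ
        + (p.1 * p.2 * (p.2 - 2 * p.1) / (2 * (p.2 - p.1) ^ 2)) • snd ℝ ℝ ℝ) p := by
  have hne : p.2 - p.1 ≠ 0 := sub_ne_zero.2 hp.symm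
  refine (((hasFDerivAt_fst.mul (hasFDerivAt_snd.pow 2)).div
    hasFDerivAt_snd_sub_fst hne).const_mul (1 / 2)).congr_fderiv ?_
  refine ContinuousLinearMap.ext fun v => ?_
  simp only [_root_.add_apply, _root_.sub_apply, _root_.smul_apply, coe_fst', coe_snd',
    smul_eq_mul, Pi.mul_apply]
  field_simp
  ring

theorem hasFDerivAt_half_deformedInfiniteSeries_partialFst (hp : p.1 ≠ p.2) :
    HasFDerivAt (fun p : ℝ × ℝ => p.2 ^ 3 / (2 * (p.2 - p.1) ^ 2))
      ((p.2 ^ 3 / (p.2 - p.1) ^ 3) • fst ℝ ℝ ℝ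
        + ((p.2 ^ 3 - 3 * p.1 * p.2 ^ 2) / (2 * (p.2 - p.1) ^ 3)) • snd ℝ ℝ ℝ) p := by
  have hne : p.2 - p.1 ≠ 0 := sub_ne_zero.2 hp.symm
  refine ((hasFDerivAt_snd.pow 3).div
    ((hasFDerivAt_snd_sub_fst.pow 2).const_mul 2) (by simpa using hne)).congr_fderiv ?_
  refine ContinuousLinearMap.ext fun v => ?_
  simp only [_root_.add_apply, _root_.sub_apply, _root_.smul_apply, coe_fst', coe_snd',
    smul_eq_mul]
  field_simp
  ring

theorem hasFDerivAt_half_deformedInfiniteSeries_partialSnd (hp : p.1 ≠ p.2) :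
    HasFDerivAt (fun p : ℝ × ℝ => p.1 * p.2 * (p.2 - 2 * p.1) / (2 * (p.2 - p.1) ^ 2))
      (((p.2 ^ 3 - 3 * p.1 * p.2 ^ 2) / (2 * (p.2 - p.1) ^ 3)) • fst ℝ ℝ ℝ
        + (p.1 ^ 3 / (p.2 - p.1) ^ 3) • snd ℝ ℝ ℝ) p := by
  have hne : p.2 - p.1 ≠ 0 := sub_ne_zero.2 hp.symm
  refine (((hasFDerivAt_fst.mul hasFDerivAt_snd).mul
    (hasFDerivAt_snd.sub (hasFDerivAt_fst.const_mul 2))).div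
    ((hasFDerivAt_snd_sub_fst.pow 2).const_mul 2) (by simpa using hne)).congr_fderiv ?_
  refine ContinuousLinearMap.ext fun v => ?_
  simp only [_root_.add_apply, _root_.sub_apply, _root_.smul_apply, coe_fst', coe_snd',
    smul_eq_mul, Pi.mul_apply]
  field_simp
  ring

end DeformedInfiniteSeries

theorem fundamental_tensor_deformed_infinite_series_riemannian_general
    (n : ℕ)
    (A : Matrix (Fin n) (Fin n) ℝ) (hAsymm : A.IsSymm)
    (b : Fin n → ℝ)
    (y : Fin n → ℝ)
    (hy1 : 0 < Real.sqrt (y ⬝ᵥ A.mulVec y))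
    (hy2 : Real.sqrt (y ⬝ᵥ A.mulVec y) < b ⬝ᵥ y) :
    ∀ i j : Fin n,
      let al := Real.sqrt (y ⬝ᵥ A.mulVec y)
      let be := b ⬝ᵥ y
      let Y := A.mulVec y
      pder j (pder i (fun z => (1 / 2) *
          (Real.sqrt (z ⬝ᵥ A.mulVec z) * (b ⬝ᵥ z) ^ 2
            / ((b ⬝ᵥ z) - Real.sqrt (z ⬝ᵥ A.mulVec z))))) y =
        (be ^ 3 / (2 * al * (be - al) ^ 2)) * A i j
          + (al ^ 3 / (be - al) ^ 3) * b i * b j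
          + ((be ^ 3 - 3 * al * be ^ 2) / (2 * al * (be - al) ^ 3))
              * (b i * Y j + b j * Y i)
          + (be ^ 3 * (3 * al - be) / (2 * al ^ 3 * (be - al) ^ 3)) * Y i * Y j := by
  intro i j
  have hp : (alphaBeta A b y).1 ≠ (alphaBeta A b y).2 := hy2.ne
  have hp_nhds : ∀ᶠ p in 𝓝 (alphaBeta A b y), p.1 ≠ p.2 :=
    (isOpen_ne_fun continuous_fst continuous_snd).mem_nhds hp
  refine (pder_pder_comp_alphaBeta b hAsymm (Real.sqrt_pos.1 hy1)
    (hp_nhds.mono fun _ => hasFDerivAt_half_deformedInfiniteSeries)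
    (hasFDerivAt_half_deformedInfiniteSeries_partialFst hp)
    (hasFDerivAt_half_deformedInfiniteSeries_partialSnd hp) i j).trans ?_
  simp only [alphaBeta]
  field_simp
  ring

/-- The fundamental tensor (Hessian of `F = (1/2)·αβ²/(β − α)`) of the Cartan space
with deformed infinite series metric `H(α, β) = αβ²/(β − α)`. -/
theorem fundamental_tensor_deformed_infinite_series_riemannian
    (n : ℕ) (hn : 1 ≤ n)
    (A : Matrix (Fin n) (Fin n) ℝ) (hA : A.PosDef) (hAsymm : A.IsSymm)
    (b : Fin n → ℝ)
    (y : Fin n → ℝ)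
    (hy1 : 0 < Real.sqrt (y ⬝ᵥ A.mulVec y))
    (hy2 : Real.sqrt (y ⬝ᵥ A.mulVec y) < b ⬝ᵥ y) :
    ∀ i j : Fin n,
      let al := Real.sqrt (y ⬝ᵥ A.mulVec y)
      let be := b ⬝ᵥ y
      let Y := A.mulVec y
      pder j (pder i (fun z => (1 / 2) *
          (Real.sqrt (z ⬝ᵥ A.mulVec z) * (b ⬝ᵥ z) ^ 2
            / ((b ⬝ᵥ z) - Real.sqrt (z ⬝ᵥ A.mulVec z))))) y =
        (be ^ 3 / (2 * al * (be - al) ^ 2)) * A i j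
          + (al ^ 3 / (be - al) ^ 3) * b i * b j
          + ((be ^ 3 - 3 * al * be ^ 2) / (2 * al * (be - al) ^ 3))
              * (b i * Y j + b j * Y i)
          + (be ^ 3 * (3 * al - be) / (2 * al ^ 3 * (be - al) ^ 3)) * Y i * Y j :=
  fundamental_tensor_deformed_infinite_series_riemannian_general n A hAsymm b y hy1 hy2
end

section
/- Let n ≥ 1, let A = (a^{ij}) be a symmetric positive-definite n×n real matrix and b ∈ ℝⁿ. For y ∈ ℝⁿ set α(y) = √(yᵀAy), β(y) = bᵀy, Y(y) = Ay, and on the open region where 0 < α(y) < β(y) set F(y) = (1/2)·β(y)³/(β(y) − α(y)). Then on this region the Hessian of F is given by ∂²F/∂y_i∂y_j = [β³/(2α(β − α)²)]·a^{ij} + [(β³ − 3αβ² + 3α²β)/(β − α)³]·b^i b^j + [(β³ − 3αβ²)/(2α(β − α)³)]·(b^i Y^j + b^j Y^i) + [β³(3α − β)/(2α³(β − α)³)]·Y^i Y^j, with α, β, Y evaluated at y. -/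
/-!
Along the coordinate line `t ↦ update y j t`, `β` and `Y_i` are affine with slopes `b_j` and
`a^{ij}`, and `α²` is quadratic with slope `2 Y_j` (as `A` is symmetric), so `∂_j α = Y_j / α`.
The quotient rule then gives `∂_i F = (β³ Y_i / α + β² (2β − 3α) b_i) / (2 (β − α)²)` at every
point of the open cone `0 < α < β`. Because the cone is open, this formula may be differentiated
once more in place of `∂_i F`, and clearing denominators yields the stated tensor.
-/

open Matrix

open Function Filter Topology

section Calculus

variable {𝕜 ι m : Type*} [NontriviallyNormedField 𝕜] [Fintype ι]
  {u v : 𝕜 → ι → 𝕜} {u' v' : ι → 𝕜} {t : 𝕜}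

theorem HasDerivAt.dotProduct (hu : HasDerivAt u u' t) (hv : HasDerivAt v v' t) :
    HasDerivAt (fun s => u s ⬝ᵥ v s) (u' ⬝ᵥ v t + u t ⬝ᵥ v') t := by
  have h := HasDerivAt.fun_sum (u := Finset.univ) fun k _ =>
    (hasDerivAt_pi.1 hu k).fun_mul (hasDerivAt_pi.1 hv k)
  rwa [Finset.sum_add_distrib] at h

theorem HasDerivAt.mulVec (A : Matrix m ι 𝕜) (hv : HasDerivAt v v' t) :
    HasDerivAt (fun s => A *ᵥ v s) (A *ᵥ v') t :=
  hasDerivAt_pi.2 fun k =>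
    ((hasDerivAt_const t (A k)).dotProduct hv).congr_deriv <| by
      rw [zero_dotProduct, zero_add]; rfl

theorem HasDerivAt.cube_div_sub {a c : ℝ → ℝ} {a' c' t : ℝ} (ha : HasDerivAt a a' t)
    (hc : HasDerivAt c c' t) (h : c t - a t ≠ 0) :
    HasDerivAt (fun s => c s ^ 3 / (c s - a s))
      ((c t ^ 3 * a' + c t ^ 2 * (2 * c t - 3 * a t) * c') / (c t - a t) ^ 2) t := by
  refine ((hc.fun_pow 3).fun_div (hc.fun_sub ha) h).congr_deriv ?_
  field_simp
  ring

end Calculus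

section CoordinateLine

variable {n : ℕ} (y : Fin n → ℝ) (i : Fin n)

theorem hasDerivAt_dotProduct_update (b : Fin n → ℝ) :
    HasDerivAt (fun t => b ⬝ᵥ update y i t) (b i) (y i) := by
  simpa using (hasDerivAt_const (y i) b).dotProduct (hasDerivAt_update y i (y i))

theorem hasDerivAt_mulVec_update_apply (A : Matrix (Fin n) (Fin n) ℝ) (k : Fin n) :
    HasDerivAt (fun t => (A *ᵥ update y i t) k) (A k i) (y i) := by
  simpa using hasDerivAt_pi.1 ((hasDerivAt_update y i (y i)).mulVec A) k

theorem hasDerivAt_quadForm_update {A : Matrix (Fin n) (Fin n) ℝ} (hA : A.IsSymm) :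
    HasDerivAt (fun t => update y i t ⬝ᵥ A *ᵥ update y i t) (2 * (A *ᵥ y) i) (y i) := by
  have h := (hasDerivAt_update y i (y i)).dotProduct ((hasDerivAt_update y i (y i)).mulVec A)
  refine h.congr_deriv ?_
  rw [update_eq_self, single_dotProduct, dotProduct_mulVec, dotProduct_single,
    ← mulVec_transpose, hA.eq]
  ring

theorem hasDerivAt_sqrt_quadForm_update {A : Matrix (Fin n) (Fin n) ℝ} (hA : A.IsSymm)
    (hy : 0 < √(y ⬝ᵥ A *ᵥ y)) :
    HasDerivAt (fun t => √(update y i t ⬝ᵥ A *ᵥ update y i t))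
      ((A *ᵥ y) i / √(y ⬝ᵥ A *ᵥ y)) (y i) := by
  have hq : update y i (y i) ⬝ᵥ A *ᵥ update y i (y i) ≠ 0 := by
    rw [update_eq_self]; exact (Real.sqrt_pos.1 hy).ne'
  refine ((hasDerivAt_quadForm_update y i hA).sqrt hq).congr_deriv ?_
  rw [update_eq_self]
  field_simp

end CoordinateLine

theorem pder_eq_of_hasDerivAt {n : ℕ} {F : (Fin n → ℝ) → ℝ} {y : Fin n → ℝ} {i : Fin n}
    {F' : ℝ}
    (h : HasDerivAt (fun t => F (update y i t)) F' (y i)) : pder i F y = F' :=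
  h.deriv

theorem pder_congr {n : ℕ} {F G : (Fin n → ℝ) → ℝ} {y : Fin n → ℝ} (i : Fin n)
    (h : F =ᶠ[𝓝 y] G) : pder i F y = pder i G y := by
  have hline : Tendsto (update y i) (𝓝 (y i)) (𝓝 y) := by
    simpa using ((continuous_const (y := y)).update i continuous_id).tendsto (y i)
  exact EventuallyEq.deriv_eq (hline.eventually h)

section DeformedSeries

variable {n : ℕ} (A : Matrix (Fin n) (Fin n) ℝ) (b : Fin n → ℝ)

noncomputable def deformedSeriesEnergy (z : Fin n → ℝ) : ℝ :=
  1 / 2 * ((b ⬝ᵥ z) ^ 3 / (b ⬝ᵥ z - √(z ⬝ᵥ A *ᵥ z)))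

def admissibleCone : Set (Fin n → ℝ) :=
  {z | 0 < √(z ⬝ᵥ A *ᵥ z) ∧ √(z ⬝ᵥ A *ᵥ z) < b ⬝ᵥ z}

noncomputable def deformedSeriesEnergyPartial (i : Fin n) (z : Fin n → ℝ) : ℝ :=
  ((b ⬝ᵥ z) ^ 3 * ((A *ᵥ z) i / √(z ⬝ᵥ A *ᵥ z))
      + (b ⬝ᵥ z) ^ 2 * (2 * (b ⬝ᵥ z) - 3 * √(z ⬝ᵥ A *ᵥ z)) * b i)
    / (2 * (b ⬝ᵥ z - √(z ⬝ᵥ A *ᵥ z)) ^ 2)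

noncomputable def deformedSeriesFundamentalTensor (y : Fin n → ℝ) (i j : Fin n) : ℝ :=
  let al := √(y ⬝ᵥ A *ᵥ y)
  let be := b ⬝ᵥ y
  let Y := A *ᵥ y
  (be ^ 3 / (2 * al * (be - al) ^ 2)) * A i j
    + ((be ^ 3 - 3 * al * be ^ 2 + 3 * al ^ 2 * be) / (be - al) ^ 3) * b i * b j
    + ((be ^ 3 - 3 * al * be ^ 2) / (2 * al * (be - al) ^ 3)) * (b i * Y j + b j * Y i)
    + (be ^ 3 * (3 * al - be) / (2 * al ^ 3 * (be - al) ^ 3)) * Y i * Y j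

variable {A b}

theorem isOpen_admissibleCone : IsOpen (admissibleCone A b) := by
  have hα : Continuous fun z : Fin n → ℝ => √(z ⬝ᵥ A *ᵥ z) :=
    (continuous_id.dotProduct (continuous_const.matrix_mulVec continuous_id)).sqrt
  exact (isOpen_lt continuous_const hα).inter
    (isOpen_lt hα (continuous_const.dotProduct continuous_id))

theorem hasDerivAt_deformedSeriesEnergy_update (hA : A.IsSymm) {z : Fin n → ℝ}
    (hz : z ∈ admissibleCone A b) (i : Fin n) :
    HasDerivAt (fun t => deformedSeriesEnergy A b (update z i t))
      (deformedSeriesEnergyPartial A b i z) (z i) := by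
  have hden : b ⬝ᵥ update z i (z i) - √(update z i (z i) ⬝ᵥ A *ᵥ update z i (z i)) ≠ 0 := by
    rw [update_eq_self]; exact (sub_pos.2 hz.2).ne'
  refine (((hasDerivAt_sqrt_quadForm_update z i hA hz.1).cube_div_sub
    (hasDerivAt_dotProduct_update z i b) hden).const_mul (1 / 2)).congr_deriv ?_
  have hα := hz.1.ne'
  have hβα := (sub_pos.2 hz.2).ne'
  rw [update_eq_self, deformedSeriesEnergyPartial]
  field_simp

theorem pder_deformedSeriesEnergy_eventuallyEq (hA : A.IsSymm) {y : Fin n → ℝ}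
    (hy : y ∈ admissibleCone A b) (i : Fin n) :
    pder i (deformedSeriesEnergy A b) =ᶠ[𝓝 y] deformedSeriesEnergyPartial A b i :=
  eventually_of_mem (isOpen_admissibleCone.mem_nhds hy) fun _ hz =>
    pder_eq_of_hasDerivAt (hasDerivAt_deformedSeriesEnergy_update hA hz i)

theorem hasDerivAt_deformedSeriesEnergyPartial_update (hA : A.IsSymm) {y : Fin n → ℝ}
    (hy : y ∈ admissibleCone A b) (i j : Fin n) :
    HasDerivAt (fun t => deformedSeriesEnergyPartial A b i (update y j t))
      (deformedSeriesFundamentalTensor A b y i j) (y j) := by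
  have ha := hasDerivAt_sqrt_quadForm_update y j hA hy.1
  have hc := hasDerivAt_dotProduct_update y j b
  have hu := hasDerivAt_mulVec_update_apply y j A i
  have ha0 : √(update y j (y j) ⬝ᵥ A *ᵥ update y j (y j)) ≠ 0 := by
    rw [update_eq_self]; exact hy.1.ne'
  have hden :
      2 * (b ⬝ᵥ update y j (y j) - √(update y j (y j) ⬝ᵥ A *ᵥ update y j (y j))) ^ 2 ≠ 0 := by
    rw [update_eq_self]; have := (sub_pos.2 hy.2).ne'; positivity
  have h := (((hc.fun_pow 3).fun_mul (hu.fun_div ha ha0)).fun_add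
    (((hc.fun_pow 2).fun_mul ((hc.const_mul 2).fun_sub (ha.const_mul 3))).mul_const (b i))).fun_div
    (((hc.fun_sub ha).fun_pow 2).const_mul 2) hden
  refine h.congr_deriv ?_
  have hα := hy.1.ne'
  have hβα := (sub_pos.2 hy.2).ne'
  simp only [update_eq_self, deformedSeriesFundamentalTensor]
  field_simp
  ring

end DeformedSeries

theorem fundamental_tensor_deformed_infinite_series_one_form_general
    (n : ℕ)
    (A : Matrix (Fin n) (Fin n) ℝ) (hAsymm : A.IsSymm)
    (b : Fin n → ℝ)
    (y : Fin n → ℝ)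
    (hy1 : 0 < Real.sqrt (y ⬝ᵥ A.mulVec y))
    (hy2 : Real.sqrt (y ⬝ᵥ A.mulVec y) < b ⬝ᵥ y) :
    ∀ i j : Fin n,
      let al := Real.sqrt (y ⬝ᵥ A.mulVec y)
      let be := b ⬝ᵥ y
      let Y := A.mulVec y
      pder j (pder i (fun z => (1 / 2) *
          ((b ⬝ᵥ z) ^ 3 / ((b ⬝ᵥ z) - Real.sqrt (z ⬝ᵥ A.mulVec z))))) y =
        (be ^ 3 / (2 * al * (be - al) ^ 2)) * A i j
          + ((be ^ 3 - 3 * al * be ^ 2 + 3 * al ^ 2 * be) / (be - al) ^ 3) * b i * b j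
          + ((be ^ 3 - 3 * al * be ^ 2) / (2 * al * (be - al) ^ 3))
              * (b i * Y j + b j * Y i)
          + (be ^ 3 * (3 * al - be) / (2 * al ^ 3 * (be - al) ^ 3)) * Y i * Y j := by
  intro i j
  have hy : y ∈ admissibleCone A b := ⟨hy1, hy2⟩
  exact (pder_congr j (pder_deformedSeriesEnergy_eventuallyEq hAsymm hy i)).trans
    (pder_eq_of_hasDerivAt (hasDerivAt_deformedSeriesEnergyPartial_update hAsymm hy i j))

/-- The fundamental tensor (Hessian of `F = (1/2)·β³/(β − α)`) of the Cartan space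
with deformed infinite series metric `H(α, β) = β³/(β − α)`. -/
theorem fundamental_tensor_deformed_infinite_series_one_form
    (n : ℕ) (hn : 1 ≤ n)
    (A : Matrix (Fin n) (Fin n) ℝ) (hA : A.PosDef) (hAsymm : A.IsSymm)
    (b : Fin n → ℝ)
    (y : Fin n → ℝ)
    (hy1 : 0 < Real.sqrt (y ⬝ᵥ A.mulVec y))
    (hy2 : Real.sqrt (y ⬝ᵥ A.mulVec y) < b ⬝ᵥ y) :
    ∀ i j : Fin n,
      let al := Real.sqrt (y ⬝ᵥ A.mulVec y)
      let be := b ⬝ᵥ y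
      let Y := A.mulVec y
      pder j (pder i (fun z => (1 / 2) *
          ((b ⬝ᵥ z) ^ 3 / ((b ⬝ᵥ z) - Real.sqrt (z ⬝ᵥ A.mulVec z))))) y =
        (be ^ 3 / (2 * al * (be - al) ^ 2)) * A i j
          + ((be ^ 3 - 3 * al * be ^ 2 + 3 * al ^ 2 * be) / (be - al) ^ 3) * b i * b j
          + ((be ^ 3 - 3 * al * be ^ 2) / (2 * al * (be - al) ^ 3))
              * (b i * Y j + b j * Y i)
          + (be ^ 3 * (3 * al - be) / (2 * al ^ 3 * (be - al) ^ 3)) * Y i * Y j :=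
  fundamental_tensor_deformed_infinite_series_one_form_general n A hAsymm b y hy1 hy2
end
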